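/- The language { aⁿbⁿ : n ≥ 0 } over the alphabet {a, b} belongs to GCID_S(2; 1, 0, 1; 1, 0, 0), i.e. it is generated by a star-controlled GCID system with two components whose insertion rules insert single symbols with a right context of length at most 1 and whose deletion rules delete single symbols context-freely. -/

import Mathlib

/-!
Graph-controlled insertion-deletion (GCID) systems.

Symbols are drawn from the universal symbol set `ℕ`, strings are lists of
symbols.  A GCID system `Π = (k, V, T, A, H, i0, F, R)` has `k` components;
rules `(i, r, j)` move a string from component `i` to component `j`, where
`r` is an insertion rule `(u, η, v)_I` (rewriting `uv → uηv`) or a deletion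
rule `(u, δ, v)_D` (rewriting `uδv → uv`), with `u, v ∈ V*` and `η, δ ∈ V⁺`.
-/

namespace GCIDPaper

/-- Strings over the universal symbol set `ℕ`. -/
abbrev Word : Type := List ℕ

/-- An insertion rule `(u, s, v)_I` (when `isInsertion = true`) or a deletion
rule `(u, s, v)_D` (when `isInsertion = false`), with left context `lctx = u`,
inserted resp. deleted string `core = s`, and right context `rctx = v`. -/
structure InsDelRule : Type where
  isInsertion : Bool
  lctx : Word
  core : Word
  rctx : Word
  deriving DecidableEq

/-- The insertion rule `(u, η, v)_I`. -/
def insRule (u η v : Word) : InsDelRule := ⟨true, u, η, v⟩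

/-- The deletion rule `(u, δ, v)_D`. -/
def delRule (u δ v : Word) : InsDelRule := ⟨false, u, δ, v⟩

/-- Applying a rule to a string: the insertion rule `(u, η, v)_I` corresponds
to the rewriting `uv → uηv`, the deletion rule `(u, δ, v)_D` to `uδv → uv`. -/
def InsDelRule.Applies (r : InsDelRule) (w w' : Word) : Prop :=
  (r.isInsertion = true →
    ∃ x y, w = x ++ r.lctx ++ r.rctx ++ y ∧
      w' = x ++ r.lctx ++ r.core ++ r.rctx ++ y) ∧
  (r.isInsertion = false →
    ∃ x y, w = x ++ r.lctx ++ r.core ++ r.rctx ++ y ∧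
      w' = x ++ r.lctx ++ r.rctx ++ y)

/-- A graph-controlled insertion-deletion system.  The components are
numbered `1, …, k`; `i0` is the initial component, `F` the set of final
components, `axioms` the finite set of axioms (placed in component `i0`),
and `R` the finite set of rules `(i, r, j)`. -/
structure System : Type where
  k : ℕ
  V : Finset ℕ
  T : Finset ℕ
  axioms : Finset Word
  i0 : ℕ
  F : Finset ℕ
  R : Finset (ℕ × InsDelRule × ℕ)
  k_pos : 1 ≤ k
  T_sub_V : T ⊆ V
  axioms_over_V : ∀ w ∈ axioms, ∀ a ∈ w, a ∈ V
  i0_mem : i0 ∈ Finset.Icc 1 k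
  F_sub : F ⊆ Finset.Icc 1 k
  R_wf : ∀ q ∈ R, q.1 ∈ Finset.Icc 1 k ∧ q.2.2 ∈ Finset.Icc 1 k ∧
    q.2.1.core ≠ [] ∧ (∀ a ∈ q.2.1.lctx, a ∈ V) ∧
    (∀ a ∈ q.2.1.core, a ∈ V) ∧ (∀ a ∈ q.2.1.rctx, a ∈ V)

/-- One derivation step between configurations: `(w)_i ⇒ (w')_j` if some rule
`(i, r, j)` of the system applied to `w` yields `w'`. -/
def Step (S : System) (c c' : Word × ℕ) : Prop :=
  ∃ q ∈ S.R, q.1 = c.2 ∧ q.2.2 = c'.2 ∧ q.2.1.Applies c.1 c'.1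

/-- The reflexive-transitive closure `⇒*` of the step relation. -/
def Derives (S : System) : Word × ℕ → Word × ℕ → Prop :=
  Relation.ReflTransGen (Step S)

/-- The language generated:
`L(Π) = { w ∈ T* : (x)_{i0} ⇒* (w)_{i_f} for some axiom x and some i_f ∈ F }`. -/
def language (S : System) : Set Word :=
  { w | (∀ a ∈ w, a ∈ S.T) ∧
    ∃ x ∈ S.axioms, ∃ f ∈ S.F, Derives S (x, S.i0) (w, f) }

/-- A single rule obeys the size bounds `(n, i', i''; m, j', j'')`. -/
def InsDelRule.SizeLE (r : InsDelRule) (n i' i'' m j' j'' : ℕ) : Prop :=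
  (r.isInsertion = true →
    r.core.length ≤ n ∧ r.lctx.length ≤ i' ∧ r.rctx.length ≤ i'') ∧
  (r.isInsertion = false →
    r.core.length ≤ m ∧ r.lctx.length ≤ j' ∧ r.rctx.length ≤ j'')

/-- The system has size `(k; n, i', i''; m, j', j'')`. -/
def HasSize (S : System) (k n i' i'' m j' j'' : ℕ) : Prop :=
  S.k = k ∧ ∀ q ∈ S.R, q.2.1.SizeLE n i' i'' m j' j''

/-- Star-controlled: the underlying undirected control graph (with an edge
`{Ci, Cj}` whenever there is a rule `(i, r, j)`) has exactly the edge set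
`{ {C1, Ci} : 2 ≤ i ≤ k }`; in particular there are no loops. -/
def StarControlled (S : System) : Prop :=
  (∀ q ∈ S.R, ∃ i ∈ Finset.Icc 2 S.k, ({q.1, q.2.2} : Finset ℕ) = {1, i}) ∧
  (∀ i ∈ Finset.Icc 2 S.k, ∃ q ∈ S.R, ({q.1, q.2.2} : Finset ℕ) = {1, i})

/-- The class `GCID(k; n, i', i''; m, j', j'')` of languages generated by GCID
systems of the given size. -/
def GCIDClass (k n i' i'' m j' j'' : ℕ) : Set (Set Word) :=
  { L | ∃ S : System, HasSize S k n i' i'' m j' j'' ∧ language S = L }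

/-- The class `GCID_S(k; n, i', i''; m, j', j'')` of languages generated by
star-controlled GCID systems of the given size. -/
def GCID_S (k n i' i'' m j' j'' : ℕ) : Set (Set Word) :=
  { L | ∃ S : System, StarControlled S ∧ HasSize S k n i' i'' m j' j'' ∧
    language S = L }

/-!
Two markers `A = 2` and `B = 3` sit behind the `a`-block and the `b`-block; the axiom is `AB`.
Component 1 inserts an `a` before `A` or deletes `A`, component 2 inserts a `b` before `B` or
deletes `B`, and the string alternates between them. Since each marker occurs at most once, every
rule has at most one place to act, so the reachable strings are `aᵖ[A]b^q[B]`, and a counting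
invariant (`Balanced`) forces `p = q` once both markers are gone and the string is back in
component 1.
-/

open List

theorem applies_insRule_iff {u η v w w' : Word} :
    (insRule u η v).Applies w w' ↔
      ∃ x y, w = x ++ u ++ v ++ y ∧ w' = x ++ u ++ η ++ v ++ y := by
  simp [InsDelRule.Applies, insRule]

theorem applies_delRule_iff {u δ v w w' : Word} :
    (delRule u δ v).Applies w w' ↔
      ∃ x y, w = x ++ u ++ δ ++ v ++ y ∧ w' = x ++ u ++ v ++ y := by
  simp [InsDelRule.Applies, delRule]

section Marker

variable {m : ℕ} {η u v w w' : Word}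

theorem applies_insRule_before_iff_of_notMem (hu : m ∉ u) (hv : m ∉ v) :
    (insRule [] η [m]).Applies (u ++ m :: v) w' ↔ w' = u ++ η ++ m :: v := by
  simp [applies_insRule_iff, append_cons_inj_of_notMem hu hv]

theorem not_applies_insRule_before_of_notMem (h : m ∉ w) :
    ¬(insRule [] η [m]).Applies w w' := by
  rw [applies_insRule_iff]
  rintro ⟨x, y, rfl, -⟩
  simp at h

theorem applies_delRule_iff_of_notMem (hu : m ∉ u) (hv : m ∉ v) :
    (delRule [] [m] []).Applies (u ++ m :: v) w' ↔ w' = u ++ v := by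
  simp [applies_delRule_iff, append_cons_inj_of_notMem hu hv]

theorem not_applies_delRule_of_notMem (h : m ∉ w) : ¬(delRule [] [m] []).Applies w w' := by
  rw [applies_delRule_iff]
  rintro ⟨x, y, rfl, -⟩
  simp at h

end Marker

theorem step_of_mem {S : System} {i j : ℕ} {r : InsDelRule} {w w' : Word}
    (hr : (i, r, j) ∈ S.R) (h : r.Applies w w') : Step S (w, i) (w', j) :=
  ⟨_, hr, rfl, rfl, h⟩

def anbnSystem : System where
  k := 2
  V := {0, 1, 2, 3}
  T := {0, 1}
  axioms := {[2, 3]}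
  i0 := 1
  F := {1}
  R := {(1, insRule [] [0] [2], 2), (1, delRule [] [2] [], 2),
        (2, insRule [] [1] [3], 1), (2, delRule [] [3] [], 1)}
  k_pos := by norm_num
  T_sub_V := by decide
  axioms_over_V := by decide
  i0_mem := by decide
  F_sub := by decide
  R_wf := by decide

theorem anbnSystem_starControlled : StarControlled anbnSystem :=
  ⟨by decide, by decide⟩

theorem anbnSystem_hasSize : HasSize anbnSystem 2 1 0 1 1 0 0 := by
  refine ⟨rfl, ?_⟩
  simp [anbnSystem, InsDelRule.SizeLE, insRule, delRule]

def sententialForm (p q : ℕ) (α β : Bool) : Word :=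
  replicate p 0 ++ ((if α then [2] else []) ++ (replicate q 1 ++ if β then [3] else []))

theorem sententialForm_true_left (p q : ℕ) (β : Bool) :
    sententialForm p q true β =
      replicate p 0 ++ 2 :: (replicate q 1 ++ if β then [3] else []) :=
  rfl

theorem sententialForm_true_right (p q : ℕ) (α : Bool) :
    sententialForm p q α true =
      (replicate p 0 ++ (if α then [2] else []) ++ replicate q 1) ++ [3] := by
  simp [sententialForm]

theorem sententialForm_false_false (n : ℕ) :
    sententialForm n n false false = replicate n 0 ++ replicate n 1 := by
  simp [sententialForm]

theorem two_mem_sententialForm {p q : ℕ} {α β : Bool} :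
    2 ∈ sententialForm p q α β ↔ α = true := by
  cases α <;> cases β <;> simp [sententialForm, mem_replicate]

theorem three_mem_sententialForm {p q : ℕ} {α β : Bool} :
    3 ∈ sententialForm p q α β ↔ β = true := by
  cases α <;> cases β <;> simp [sententialForm, mem_replicate]

section Rules

variable {p q : ℕ} {α β : Bool} {w' : Word}

theorem applies_insA_sententialForm_iff :
    (insRule [] [0] [2]).Applies (sententialForm p q α β) w' ↔
    α = true ∧ w' = sententialForm (p + 1) q α β := by
  cases α
  · simp [not_applies_insRule_before_of_notMem (two_mem_sententialForm.not.2 Bool.false_ne_true)]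
  · rw [sententialForm_true_left, applies_insRule_before_iff_of_notMem
      (by simp [mem_replicate]) (by cases β <;> simp [mem_replicate])]
    simp [sententialForm, replicate_succ']

theorem applies_delA_sententialForm_iff :
    (delRule [] [2] []).Applies (sententialForm p q α β) w' ↔
    α = true ∧ w' = sententialForm p q false β := by
  cases α
  · simp [not_applies_delRule_of_notMem (two_mem_sententialForm.not.2 Bool.false_ne_true)]
  · rw [sententialForm_true_left, applies_delRule_iff_of_notMem (by simp [mem_replicate])
      (by cases β <;> simp [mem_replicate])]
    simp [sententialForm]

theorem applies_insB_sententialForm_iff :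
    (insRule [] [1] [3]).Applies (sententialForm p q α β) w' ↔
    β = true ∧ w' = sententialForm p (q + 1) α β := by
  cases β
  · simp [not_applies_insRule_before_of_notMem
      (three_mem_sententialForm.not.2 Bool.false_ne_true)]
  · rw [sententialForm_true_right, applies_insRule_before_iff_of_notMem
      (by cases α <;> simp [mem_replicate]) (by simp)]
    simp [sententialForm, replicate_succ']

theorem applies_delB_sententialForm_iff :
    (delRule [] [3] []).Applies (sententialForm p q α β) w' ↔
    β = true ∧ w' = sententialForm p q α false := by
  cases β
  · simp [not_applies_delRule_of_notMem (three_mem_sententialForm.not.2 Bool.false_ne_true)]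
  · rw [sententialForm_true_right, applies_delRule_iff_of_notMem
      (by cases α <;> simp [mem_replicate]) (by simp)]
    simp [sententialForm]

end Rules

/-- Component 1 adds an `a` or removes `A`, component 2 adds a `b` or removes `B`, so
`p + [B present] - q - [A present]` is `0` in component 1 and `1` in component 2. -/
def Balanced (c : Word × ℕ) : Prop :=
  ∃ p q α β, c.1 = sententialForm p q α β ∧ p + β.toNat + 1 = q + α.toNat + c.2

theorem Balanced.step {c c' : Word × ℕ} (hc : Balanced c) (h : Step anbnSystem c c') :
    Balanced c' := by
  obtain ⟨w, i⟩ := c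
  obtain ⟨w', j⟩ := c'
  obtain ⟨p, q, α, β, rfl, hbal⟩ := hc
  obtain ⟨r, hr, rfl, rfl, happ⟩ := h
  simp only [anbnSystem, Finset.mem_insert, Finset.mem_singleton] at hr
  rcases hr with rfl | rfl | rfl | rfl
  · obtain ⟨rfl, rfl⟩ := applies_insA_sententialForm_iff.1 happ
    exact ⟨p + 1, q, true, β, rfl, by simp at hbal ⊢; omega⟩
  · obtain ⟨rfl, rfl⟩ := applies_delA_sententialForm_iff.1 happ
    exact ⟨p, q, false, β, rfl, by simp at hbal ⊢; omega⟩
  · obtain ⟨rfl, rfl⟩ := applies_insB_sententialForm_iff.1 happ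
    exact ⟨p, q + 1, α, true, rfl, by simp at hbal ⊢; omega⟩
  · obtain ⟨rfl, rfl⟩ := applies_delB_sententialForm_iff.1 happ
    exact ⟨p, q, α, false, rfl, by simp at hbal ⊢; omega⟩

theorem Balanced.derives {c c' : Word × ℕ} (hc : Balanced c) (h : Derives anbnSystem c c') :
    Balanced c' := by
  induction h with
  | refl => exact hc
  | tail _ hstep ih => exact ih.step hstep

theorem derives_sententialForm (n : ℕ) :
    Derives anbnSystem ([2, 3], 1) (sententialForm n n true true, 1) := by
  induction n with
  | zero => exact Relation.ReflTransGen.refl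
  | succ n ih =>
    have insA : Step anbnSystem (sententialForm n n true true, 1)
        (sententialForm (n + 1) n true true, 2) :=
      step_of_mem (by simp [anbnSystem]) (applies_insA_sententialForm_iff.2 ⟨rfl, rfl⟩)
    have insB : Step anbnSystem (sententialForm (n + 1) n true true, 2)
        (sententialForm (n + 1) (n + 1) true true, 1) :=
      step_of_mem (by simp [anbnSystem]) (applies_insB_sententialForm_iff.2 ⟨rfl, rfl⟩)
    exact (ih.tail insA).tail insB

theorem language_anbnSystem :
    language anbnSystem = { w : Word | ∃ n : ℕ, w = replicate n 0 ++ replicate n 1 } := by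
  ext w
  constructor
  · rintro ⟨hT, x, hx, f, hf, hder⟩
    simp only [anbnSystem, Finset.mem_singleton] at hx hf
    subst hx hf
    obtain ⟨p, q, α, β, rfl, hbal⟩ := Balanced.derives ⟨0, 0, true, true, rfl, rfl⟩ hder
    have hα : α = false := Bool.eq_false_iff.2 fun h => by
      simpa [anbnSystem] using hT 2 (two_mem_sententialForm.2 h)
    have hβ : β = false := Bool.eq_false_iff.2 fun h => by
      simpa [anbnSystem] using hT 3 (three_mem_sententialForm.2 h)
    subst hα hβ
    obtain rfl : p = q := by simp only [Bool.toNat_false] at hbal; omega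
    exact ⟨p, sententialForm_false_false p⟩
  · rintro ⟨n, rfl⟩
    refine ⟨?_, [2, 3], by simp [anbnSystem], 1, by simp [anbnSystem], ?_⟩
    · intro a ha
      simp only [mem_append, mem_replicate] at ha
      rcases ha with ⟨-, rfl⟩ | ⟨-, rfl⟩ <;> simp [anbnSystem]
    · have delA : Step anbnSystem (sententialForm n n true true, 1)
          (sententialForm n n false true, 2) :=
        step_of_mem (by simp [anbnSystem]) (applies_delA_sententialForm_iff.2 ⟨rfl, rfl⟩)
      have delB : Step anbnSystem (sententialForm n n false true, 2)
          (sententialForm n n false false, 1) :=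
        step_of_mem (by simp [anbnSystem]) (applies_delB_sententialForm_iff.2 ⟨rfl, rfl⟩)
      have h := ((derives_sententialForm n).tail delA).tail delB
      rwa [sententialForm_false_false] at h

/-- The language `{ aⁿbⁿ : n ≥ 0 }` over the two-letter alphabet
`{a, b}` (encoded as `a = 0`, `b = 1`) belongs to
`GCID_S(2; 1, 0, 1; 1, 0, 0)`: it is generated by a star-controlled GCID
system with two components whose insertion rules insert single symbols with a
right context of length at most 1 and whose deletion rules delete single
symbols context-freely. -/
theorem anbn_mem_gcid_s_2_101_100 :
    { w : Word | ∃ n : ℕ, w = List.replicate n 0 ++ List.replicate n 1 } ∈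
      GCID_S 2 1 0 1 1 0 0 :=
  ⟨anbnSystem, anbnSystem_starControlled, anbnSystem_hasSize, language_anbnSystem⟩

end GCIDPaper
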